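/- For every q ≥ 0 and every α with 0 < α < −κ, the function u ↦ (1 + ‖u‖²)^{q/2} · (1 + exp(β(h(u) − α‖u‖²))) · exp(−β h(u)) is integrable on ℂ^V with respect to Lebesgue measure; in particular there is a constant C (depending on q, α, β, κ, λ and G) bounding its integral. -/

import Mathlib

open Finset MeasureTheory

/-- The DNLS Hamiltonian `h(u) = ⟨u,(−Δ_d)u⟩ − κ‖u‖² + (λ/2) ∑_x |u(x)|⁴` on a finite
simple graph, where `(−Δ_d u)(x) = deg(x) u(x) − ∑_{y∼x} u(y)`. -/
noncomputable def dnlsH {V : Type*} [Fintype V] (G : SimpleGraph V) [DecidableRel G.Adj]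
    (lam kappa : ℝ) (u : V → ℂ) : ℝ :=
  (∑ x, (starRingEnd ℂ) (u x) *
      ((G.degree x : ℂ) * u x - ∑ y ∈ G.neighborFinset x, u y)).re
    - kappa * ∑ x, ‖u x‖ ^ 2 + lam / 2 * ∑ x, ‖u x‖ ^ 4

section Aux

variable {V : Type*} [Fintype V]

private lemma neighbor_sum_swap (G : SimpleGraph V) [DecidableRel G.Adj] (f : V → V → ℝ) :
    ∑ x, ∑ y ∈ G.neighborFinset x, f x y = ∑ x, ∑ y ∈ G.neighborFinset x, f y x := by
  have key : ∀ g : V → V → ℝ, ∑ x, ∑ y ∈ G.neighborFinset x, g x y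
      = ∑ x, ∑ y, if G.Adj x y then g x y else 0 := by
    intro g
    refine Finset.sum_congr rfl fun x _ => ?_
    rw [SimpleGraph.neighborFinset_eq_filter, Finset.sum_filter]
  rw [key, key, Finset.sum_comm]
  refine Finset.sum_congr rfl fun x _ => Finset.sum_congr rfl fun y _ => ?_
  simp only [G.adj_comm x y]

private lemma quad_re_nonneg (G : SimpleGraph V) [DecidableRel G.Adj] (u : V → ℂ) :
    0 ≤ (∑ x, (starRingEnd ℂ) (u x) *
      ((G.degree x : ℂ) * u x - ∑ y ∈ G.neighborFinset x, u y)).re := by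
  set t : V → V → ℝ := fun x y => ((starRingEnd ℂ) (u x) * u y).re with ht
  have hterm : ∀ x, ((starRingEnd ℂ) (u x) *
      ((G.degree x : ℂ) * u x - ∑ y ∈ G.neighborFinset x, u y)).re
      = ∑ y ∈ G.neighborFinset x, (‖u x‖ ^ 2 - t x y) := by
    intro x
    have h1 : ((starRingEnd ℂ) (u x) * ((G.degree x : ℂ) * u x)).re
        = (G.degree x : ℝ) * ‖u x‖ ^ 2 := by
      rw [show (starRingEnd ℂ) (u x) * ((G.degree x : ℂ) * u x)
          = ((G.degree x : ℂ)) * ((starRingEnd ℂ) (u x) * u x) by ring,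
        RCLike.conj_mul]
      simp [← Complex.ofReal_pow]
    rw [mul_sub, Complex.sub_re, h1, Finset.mul_sum, Complex.re_sum,
      Finset.sum_sub_distrib]
    congr 1
    rw [Finset.sum_const, SimpleGraph.degree, nsmul_eq_mul]
  rw [Complex.re_sum]
  simp_rw [hterm]
  have hswap := neighbor_sum_swap G (fun x y => ‖u x‖ ^ 2 - t x y)
  have htsymm : ∀ x y, t y x = t x y := by
    intro x y
    have : (starRingEnd ℂ) (u y) * u x = (starRingEnd ℂ) ((starRingEnd ℂ) (u x) * u y) := by
      simp [mul_comm]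
    rw [ht]; simp only [this, Complex.conj_re]
  have hdouble : 2 * ∑ x, ∑ y ∈ G.neighborFinset x, (‖u x‖ ^ 2 - t x y)
      = ∑ x, ∑ y ∈ G.neighborFinset x, ((‖u x‖ ^ 2 - t x y) + (‖u y‖ ^ 2 - t y x)) := by
    rw [two_mul]
    nth_rewrite 2 [hswap]
    rw [← Finset.sum_add_distrib]
    exact Finset.sum_congr rfl fun x _ => (Finset.sum_add_distrib).symm
  have hpt : ∀ x y, 0 ≤ (‖u x‖ ^ 2 - t x y) + (‖u y‖ ^ 2 - t y x) := by
    intro x y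
    have h1 : t x y ≤ ‖u x‖ * ‖u y‖ := by
      calc t x y ≤ ‖(starRingEnd ℂ) (u x) * u y‖ := Complex.re_le_norm _
        _ = ‖u x‖ * ‖u y‖ := by rw [norm_mul, RingHomIsometric.norm_map]
    rw [htsymm x y]
    nlinarith [sq_nonneg (‖u x‖ - ‖u y‖)]
  have : 0 ≤ 2 * ∑ x, ∑ y ∈ G.neighborFinset x, (‖u x‖ ^ 2 - t x y) := by
    rw [hdouble]
    exact Finset.sum_nonneg fun x _ => Finset.sum_nonneg fun y _ => hpt x y
  linarith

private lemma dnlsH_ge (G : SimpleGraph V) [DecidableRel G.Adj]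
    {lam kappa alpha : ℝ} (hlam : 0 < lam) (halpha' : alpha < -kappa) (u : V → ℂ) :
    alpha * ∑ x, ‖u x‖ ^ 2 ≤ dnlsH G lam kappa u := by
  have hQ := quad_re_nonneg G u
  have hN : (0:ℝ) ≤ ∑ x, ‖u x‖ ^ 2 := Finset.sum_nonneg fun x _ => by positivity
  have hM : (0:ℝ) ≤ ∑ x, ‖u x‖ ^ 4 := Finset.sum_nonneg fun x _ => by positivity
  unfold dnlsH
  nlinarith

private lemma one_add_sum_le_prod {a : V → ℝ} (ha : ∀ x, 0 ≤ a x) (s : Finset V) :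
    1 + ∑ x ∈ s, a x ≤ ∏ x ∈ s, (1 + a x) := by
  classical
  induction s using Finset.induction_on with
  | empty => simp
  | @insert b s' hb ih =>
    rw [Finset.sum_insert hb, Finset.prod_insert hb]
    have h3 : (0:ℝ) ≤ ∑ x ∈ s', a x := Finset.sum_nonneg fun x _ => ha x
    nlinarith [ha b, ih]

private lemma one_dim_integrable {c q : ℝ} (hc : 0 < c) (hq : 0 ≤ q) :
    Integrable (fun z : ℂ => (1 + ‖z‖ ^ 2) ^ (q / 2) * Real.exp (-(c * ‖z‖ ^ 2))) := by
  have hbase : Integrable (fun z : ℂ => Real.exp (-(c / 2) * ‖z‖ ^ 2)) := by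
    have h0 : Integrable (fun v : ℂ =>
        Complex.exp (-(c/2 : ℂ) * (‖v‖:ℂ) ^ 2 + 0 * (inner ℝ (0:ℂ) v : ℝ))) :=
      GaussianFourier.integrable_cexp_neg_mul_sq_norm_add (by simpa using half_pos hc) 0 0
    have := h0.norm
    refine this.congr (Filter.Eventually.of_forall fun v => ?_)
    have hexp : (-(c/2 : ℂ) * (‖v‖:ℂ) ^ 2 + 0 * ((inner ℝ (0:ℂ) v : ℝ) : ℂ))
        = ((-(c/2) * ‖v‖ ^ 2 : ℝ) : ℂ) := by push_cast; ring
    show ‖Complex.exp (-(c/2 : ℂ) * (‖v‖:ℂ) ^ 2 + 0 * ((inner ℝ (0:ℂ) v : ℝ) : ℂ))‖ = _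
    rw [hexp, Complex.norm_exp, Complex.ofReal_re]
  set t0 : ℝ := 2 * q / c with ht0
  have ht0nn : 0 ≤ t0 := by positivity
  set M : ℝ := Real.exp (q / 2 * Real.log (1 + t0)) with hM
  have hbnd : ∀ t : ℝ, 0 ≤ t → (1 + t) ^ (q / 2) * Real.exp (-(c * t))
      ≤ M * Real.exp (-(c / 2) * t) := by
    intro t htnn
    have hlog : Real.log (1 + t) ≤ Real.log (1 + t0) + (t - t0) / (1 + t0) := by
      have hpos : (0:ℝ) < 1 + t := by linarith
      have hpos0 : (0:ℝ) < 1 + t0 := by linarith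
      have := Real.log_le_sub_one_of_pos (show (0:ℝ) < (1 + t) / (1 + t0) by positivity)
      rw [Real.log_div (ne_of_gt hpos) (ne_of_gt hpos0)] at this
      have heq : (1 + t) / (1 + t0) - 1 = (t - t0) / (1 + t0) := by
        field_simp; ring
      linarith [this, heq ▸ this]
    have hcoef : q / 2 * ((t - t0) / (1 + t0)) ≤ c / 2 * t := by
      have hpos0 : (0:ℝ) < 1 + t0 := by linarith
      rcases le_total t t0 with h | h
      · have h1 : q / 2 * ((t - t0) / (1 + t0)) ≤ 0 := by
          apply mul_nonpos_of_nonneg_of_nonpos (by positivity)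
          apply div_nonpos_of_nonpos_of_nonneg <;> linarith
        nlinarith
      · have key : q / 2 / (1 + t0) ≤ c / 2 := by
          rw [div_le_iff₀ hpos0]
          have heq2 : c / 2 * (1 + t0) = c / 2 + q := by
            rw [ht0]; field_simp
          rw [heq2]; linarith
        have h2 : q / 2 * ((t - t0) / (1 + t0)) = (q / 2 / (1 + t0)) * (t - t0) := by ring
        rw [h2]
        nlinarith [mul_le_mul_of_nonneg_right key (show (0:ℝ) ≤ t - t0 by linarith)]
    have hrpow : (1 + t) ^ (q / 2) = Real.exp (Real.log (1 + t) * (q / 2)) :=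
      Real.rpow_def_of_pos (by linarith) _
    have h1 : (1 + t) ^ (q / 2) ≤ M * Real.exp (c / 2 * t) := by
      rw [hrpow, hM, ← Real.exp_add]
      apply Real.exp_le_exp.2
      nlinarith [mul_le_mul_of_nonneg_left hlog (show (0:ℝ) ≤ q / 2 by positivity)]
    calc (1 + t) ^ (q / 2) * Real.exp (-(c * t))
        ≤ (M * Real.exp (c / 2 * t)) * Real.exp (-(c * t)) := by
          apply mul_le_mul_of_nonneg_right h1 (Real.exp_nonneg _)
      _ = M * Real.exp (-(c / 2) * t) := by
          rw [mul_assoc, ← Real.exp_add]; ring_nf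
  have hcont : Continuous fun z : ℂ => (1 + ‖z‖ ^ 2) ^ (q / 2) * Real.exp (-(c * ‖z‖ ^ 2)) := by
    apply Continuous.mul
    · exact (continuous_const.add ((continuous_norm).pow 2)).rpow_const
        (fun z => Or.inr (by positivity))
    · exact Real.continuous_exp.comp (continuous_const.mul ((continuous_norm).pow 2)).neg
  refine ((hbase.const_mul M).mono' hcont.aestronglyMeasurable
    (Filter.Eventually.of_forall fun z => ?_))
  rw [Real.norm_eq_abs, abs_of_nonneg (by positivity)]
  exact hbnd (‖z‖ ^ 2) (by positivity)

end Aux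

/-- For every `q ≥ 0` and every `α` with `0 < α < −κ`, the function
`u ↦ (1 + ‖u‖²)^{q/2} (1 + exp(β(h(u) − α‖u‖²))) exp(−β h(u))` is integrable on `ℂ^V`
with respect to Lebesgue measure; in particular its integral is bounded by a constant. -/
theorem remainder_weight_integrable
    {V : Type*} [Fintype V] [Nonempty V]
    (G : SimpleGraph V) [DecidableRel G.Adj]
    (lam kappa beta : ℝ) (hlam : 0 < lam) (hkappa : kappa < 0) (hbeta : 0 < beta)
    (q alpha : ℝ) (hq : 0 ≤ q) (halpha : 0 < alpha) (halpha' : alpha < -kappa) :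
    Integrable
      (fun u : V → ℂ =>
        (1 + ∑ x, ‖u x‖ ^ 2) ^ (q / 2)
          * (1 + Real.exp (beta * (dnlsH G lam kappa u - alpha * ∑ x, ‖u x‖ ^ 2)))
          * Real.exp (-beta * dnlsH G lam kappa u)) volume
    ∧ ∃ C : ℝ,
        (∫ u : V → ℂ,
          (1 + ∑ x, ‖u x‖ ^ 2) ^ (q / 2)
            * (1 + Real.exp (beta * (dnlsH G lam kappa u - alpha * ∑ x, ‖u x‖ ^ 2)))
            * Real.exp (-beta * dnlsH G lam kappa u)) ≤ C := by
  set F : (V → ℂ) → ℝ := fun u =>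
    (1 + ∑ x, ‖u x‖ ^ 2) ^ (q / 2)
      * (1 + Real.exp (beta * (dnlsH G lam kappa u - alpha * ∑ x, ‖u x‖ ^ 2)))
      * Real.exp (-beta * dnlsH G lam kappa u) with hF
  set c : ℝ := beta * alpha with hc
  have hcpos : 0 < c := by positivity
  set φ : ℂ → ℝ := fun z => (1 + ‖z‖ ^ 2) ^ (q / 2) * Real.exp (-(c * ‖z‖ ^ 2)) with hφ
  have hφint : Integrable φ := one_dim_integrable hcpos hq
  have hGint : Integrable (fun u : V → ℂ => 2 * ∏ x, φ (u x)) :=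
    (Integrable.fintype_prod (f := fun _ : V => φ) fun _ => hφint).const_mul 2
  -- pointwise bound
  have hbound : ∀ u : V → ℂ, F u ≤ 2 * ∏ x, φ (u x) := by
    intro u
    set N : ℝ := ∑ x, ‖u x‖ ^ 2 with hNdef
    have hNnn : 0 ≤ N := Finset.sum_nonneg fun x _ => by positivity
    have hh := dnlsH_ge G hlam halpha' u
    rw [← hNdef] at hh
    have hexp1 : Real.exp (-beta * dnlsH G lam kappa u) ≤ Real.exp (-(c * N)) := by
      apply Real.exp_le_exp.2
      rw [hc]
      nlinarith
    have hexp2 : Real.exp (beta * (dnlsH G lam kappa u - alpha * N))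
        * Real.exp (-beta * dnlsH G lam kappa u) = Real.exp (-(c * N)) := by
      rw [← Real.exp_add]
      congr 1
      rw [hc]; ring
    have step1 : F u ≤ (1 + N) ^ (q / 2) * (2 * Real.exp (-(c * N))) := by
      rw [hF]
      simp only [← hNdef]
      have hr : (0:ℝ) ≤ (1 + N) ^ (q / 2) := Real.rpow_nonneg (by linarith) _
      have expand : (1 + N) ^ (q / 2)
          * (1 + Real.exp (beta * (dnlsH G lam kappa u - alpha * N)))
          * Real.exp (-beta * dnlsH G lam kappa u)
          = (1 + N) ^ (q / 2) * (Real.exp (-beta * dnlsH G lam kappa u)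
            + Real.exp (-(c * N))) := by
        rw [← hexp2]; ring
      rw [expand]
      have : Real.exp (-beta * dnlsH G lam kappa u) + Real.exp (-(c * N))
          ≤ 2 * Real.exp (-(c * N)) := by linarith
      exact mul_le_mul_of_nonneg_left this hr
    have step2 : (1 + N) ^ (q / 2) ≤ ∏ x, (1 + ‖u x‖ ^ 2) ^ (q / 2) := by
      have hpr := Real.finset_prod_rpow Finset.univ (fun x => 1 + ‖u x‖ ^ 2)
        (fun x _ => by positivity) (q / 2)
      rw [hpr]
      apply Real.rpow_le_rpow (by linarith)
        (one_add_sum_le_prod (fun x => by positivity) _) (by positivity)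
    have step3 : Real.exp (-(c * N)) = ∏ x, Real.exp (-(c * ‖u x‖ ^ 2)) := by
      rw [← Real.exp_sum]
      congr 1
      rw [hNdef, Finset.mul_sum, ← Finset.sum_neg_distrib]
    have step4 : (1 + N) ^ (q / 2) * (2 * Real.exp (-(c * N))) = 2 *
        ((1 + N) ^ (q / 2) * Real.exp (-(c * N))) := by ring
    calc F u ≤ (1 + N) ^ (q / 2) * (2 * Real.exp (-(c * N))) := step1
      _ = 2 * ((1 + N) ^ (q / 2) * Real.exp (-(c * N))) := step4
      _ ≤ 2 * ((∏ x, (1 + ‖u x‖ ^ 2) ^ (q / 2)) * ∏ x, Real.exp (-(c * ‖u x‖ ^ 2))) := by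
          rw [step3]
          have hpnn : (0:ℝ) ≤ ∏ x, Real.exp (-(c * ‖u x‖ ^ 2)) :=
            Finset.prod_nonneg fun x _ => Real.exp_nonneg _
          have := mul_le_mul_of_nonneg_right step2 hpnn
          linarith
      _ = 2 * ∏ x, φ (u x) := by rw [hφ, ← Finset.prod_mul_distrib]
  have hFnn : ∀ u : V → ℂ, 0 ≤ F u := by
    intro u
    rw [hF]
    have : (0:ℝ) ≤ 1 + ∑ x, ‖u x‖ ^ 2 := by positivity
    positivity
  -- measurability
  have hNcont : Continuous fun u : V → ℂ => ∑ x, ‖u x‖ ^ 2 :=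
    continuous_finset_sum _ fun x _ => ((continuous_apply x).norm.pow 2)
  have hN4cont : Continuous fun u : V → ℂ => ∑ x, ‖u x‖ ^ 4 :=
    continuous_finset_sum _ fun x _ => ((continuous_apply x).norm.pow 4)
  have hQcont : Continuous fun u : V → ℂ => (∑ x, (starRingEnd ℂ) (u x) *
      ((G.degree x : ℂ) * u x - ∑ y ∈ G.neighborFinset x, u y)).re :=
    Complex.continuous_re.comp (continuous_finset_sum _ fun x _ =>
      ((Complex.continuous_conj.comp (continuous_apply x)).mul
        ((continuous_const.mul (continuous_apply x)).sub
          (continuous_finset_sum _ fun y _ => continuous_apply y))))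
  have hHcont : Continuous fun u : V → ℂ => dnlsH G lam kappa u := by
    unfold dnlsH
    exact (hQcont.sub (continuous_const.mul hNcont)).add (continuous_const.mul hN4cont)
  have hFcont : Continuous F := by
    rw [hF]
    apply Continuous.mul
    apply Continuous.mul
    · exact (continuous_const.add hNcont).rpow_const fun u => Or.inr (by positivity)
    · exact continuous_const.add (Real.continuous_exp.comp
        (continuous_const.mul (hHcont.sub (continuous_const.mul hNcont))))
    · exact Real.continuous_exp.comp (continuous_const.mul hHcont)
  have hFint : Integrable F := by
    refine hGint.mono' hFcont.aestronglyMeasurable (Filter.Eventually.of_forall fun u => ?_)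
    rw [Real.norm_eq_abs, abs_of_nonneg (hFnn u)]
    exact hbound u
  exact ⟨hFint, ⟨∫ u, F u, le_refl _⟩⟩
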